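/- arXiv:2509.09188 — 4 statements merged into one kernel-verified Lean document; each statement's English description precedes it below -/
import Mathlib

section
/- Let (Y_t)_{t≥0} be a real-valued stochastic process on a probability space whose sample paths are càdlàg (right-continuous with left limits), and let Y_∞ be a real random variable on the same space. If for every fixed s > 0 the sequence (Y_{ns})_{n∈ℕ} converges in distribution to Y_∞ as n → ∞ through the positive integers, then Y_t converges in distribution to Y_∞ as t → ∞ through the reals. (Lemma 5.1 of the paper, convergence-in-distribution version.) -/
open MeasureTheory Filter Set
open scoped ENNReal Topology ProbabilityTheory BoundedContinuousFunction

/-!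
Croft–Kingman lemma. Fix a closed neighbourhood `C` of the limit and put
`F N = {s | g (n * s) ∈ C for all n ≥ N}`. These sets cover `(0, ∞)`, so by Baire's theorem some
`closure (F N)` contains an interval `(a, b)`, and right-continuity upgrades this to `(a, b) ⊆ F N`.
For `n ≥ a / (b - a)` the intervals `(n a, n b)` overlap, so every large `t` is some `n * s` with
`n ≥ N` and `s ∈ (a, b)`, whence `g t ∈ C`. The theorem is the lemma applied to `t ↦ E f(Y_t)`,
which is right-continuous by dominated convergence.
-/

lemma exists_Ioo_subset_closure_of_Ioi_subset_iUnion {ι : Type*} [Countable ι] {F : ι → Set ℝ}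
    {c : ℝ} (h : Ioi c ⊆ ⋃ i, F i) :
    ∃ i a b, c < a ∧ a < b ∧ Ioo a b ⊆ closure (F i) := by
  have hcover : ⋃ i, (closure (F i) ∪ Iic c) = univ := by
    refine eq_univ_of_forall fun x => ?_
    rcases le_or_gt x c with hx | hx
    · obtain ⟨i, -⟩ := mem_iUnion.1 (h (lt_add_one c))
      exact mem_iUnion.2 ⟨i, Or.inr hx⟩
    · obtain ⟨i, hi⟩ := mem_iUnion.1 (h hx)
      exact mem_iUnion.2 ⟨i, Or.inl (subset_closure hi)⟩
  obtain ⟨x, hx, hcx⟩ := (dense_iUnion_interior_of_closed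
    (fun i => isClosed_closure.union isClosed_Iic) hcover).exists_mem_open isOpen_Ioi nonempty_Ioi
  obtain ⟨i, hxi⟩ := mem_iUnion.1 hx
  obtain ⟨l, u, ⟨hlx, hxu⟩, hsub⟩ :=
    mem_nhds_iff_exists_Ioo_subset.1 (mem_interior_iff_mem_nhds.1 hxi)
  refine ⟨i, x, u, hcx, hxu, fun y hy => ?_⟩
  refine (hsub ⟨hlx.trans hy.1, hy.2⟩).resolve_right ?_
  exact not_le.2 ((mem_Ioi.1 hcx).trans hy.1)

lemma Ioo_subset_preimage_of_subset_closure {X : Type*} [TopologicalSpace X] {f : ℝ → X}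
    {C : Set X} {a b : ℝ} (hC : IsClosed C) (hf : ∀ x ∈ Ioo a b, ContinuousWithinAt f (Ioi x) x)
    (h : Ioo a b ⊆ closure (f ⁻¹' C)) : Ioo a b ⊆ f ⁻¹' C := by
  intro x hx
  have hright : Ioo x b ⊆ closure (Ioo x b ∩ f ⁻¹' C) := fun y hy =>
    isOpen_Ioo.inter_closure ⟨hy, h ⟨hx.1.trans hy.1, hy.2⟩⟩
  have hx_mem : x ∈ closure (Ioo x b ∩ f ⁻¹' C) := by
    have : x ∈ closure (Ioo x b) := by
      rw [closure_Ioo hx.2.ne]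
      exact left_mem_Icc.2 hx.2.le
    simpa only [closure_closure] using closure_mono hright this
  have := ((hf x hx).mono fun y hy => hy.1.1).mem_closure (t := C) hx_mem fun y hy => hy.2
  rwa [hC.closure_eq] at this

lemma eventually_exists_nat_mul_mem_Ioo (N : ℕ) {a b : ℝ} (ha : 0 ≤ a) (hab : a < b) :
    ∀ᶠ t in atTop, ∃ n ≥ N, ∃ s ∈ Ioo a b, (n : ℝ) * s = t := by
  have hb : 0 < b := ha.trans_lt hab
  filter_upwards [eventually_gt_atTop (N * b), eventually_gt_atTop (a * b / (b - a))]
    with t htN hta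
  have ht : 0 < t := lt_of_le_of_lt (by positivity) htN
  set n : ℕ := ⌊t / b⌋₊ + 1
  have hn_gt : t / b < n := by
    simpa only [n, Nat.cast_add, Nat.cast_one] using Nat.lt_floor_add_one (t / b)
  have hn_le : (n : ℝ) ≤ t / b + 1 := by
    simpa only [n, Nat.cast_add, Nat.cast_one, add_le_add_iff_right]
      using Nat.floor_le (div_pos ht hb).le
  have hn : (0 : ℝ) < n := (div_pos ht hb).trans hn_gt
  refine ⟨n, ?_, t / n, ⟨?_, ?_⟩, mul_div_cancel₀ t hn.ne'⟩
  · have : (N : ℝ) < n := ((lt_div_iff₀ hb).2 htN).trans hn_gt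
    exact_mod_cast this.le
  · rw [lt_div_iff₀ hn]
    rw [div_lt_iff₀ (sub_pos.2 hab)] at hta
    calc a * n ≤ a * (t / b + 1) := mul_le_mul_of_nonneg_left hn_le ha
      _ < t := by
        rw [mul_add, mul_one, ← sub_pos]
        field_simp
        nlinarith
  · rw [div_lt_iff₀ hn, mul_comm]
    exact (div_lt_iff₀ hb).1 hn_gt

theorem tendsto_atTop_of_tendsto_nat_mul {X : Type*} [TopologicalSpace X] [RegularSpace X]
    {g : ℝ → X} {L : X} (hg : ∀ t, 0 ≤ t → ContinuousWithinAt g (Ici t) t)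
    (h : ∀ s, 0 < s → Tendsto (fun n : ℕ => g (n * s)) atTop (𝓝 L)) :
    Tendsto g atTop (𝓝 L) := by
  refine (closed_nhds_basis L).tendsto_right_iff.2 fun C ⟨hCL, hC⟩ => ?_
  set F : ℕ → Set ℝ := fun N => {s | ∀ n ≥ N, g (n * s) ∈ C}
  have hcover : Ioi 0 ⊆ ⋃ N, F N := fun s hs =>
    mem_iUnion.2 (eventually_atTop.1 ((h s hs).eventually hCL))
  obtain ⟨N, a, b, ha, hab, hsub⟩ := exists_Ioo_subset_closure_of_Ioi_subset_iUnion hcover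
  have hF : Ioo a b ⊆ F N := fun s hs n hn => by
    refine Ioo_subset_preimage_of_subset_closure (f := fun u => g (n * u)) hC (fun x hx => ?_)
      (hsub.trans (closure_mono fun u hu => hu n hn)) hs
    have hnx : 0 ≤ (n : ℝ) * x := mul_nonneg n.cast_nonneg (ha.trans hx.1).le
    exact (hg _ hnx).comp (continuous_const_mul (n : ℝ)).continuousWithinAt
      fun u (hu : x < u) => mul_le_mul_of_nonneg_left hu.le n.cast_nonneg
  filter_upwards [eventually_exists_nat_mul_mem_Ioo N ha.le hab] with t ⟨n, hn, s, hs, hst⟩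
  exact hst ▸ hF hs n hn

theorem stmt2_general {Ω : Type*} [MeasureSpace Ω] [IsProbabilityMeasure (ℙ : Measure Ω)]
    (Y : ℝ → Ω → ℝ) (Yinf : Ω → ℝ)
    (hmeas : ∀ t : ℝ, 0 ≤ t → Measurable (Y t))
    -- right-continuity of the paths at every `t ≥ 0`
    (hrc : ∀ ω, ∀ t : ℝ, 0 ≤ t → ContinuousWithinAt (fun s => Y s ω) (Set.Ici t) t)
    -- convergence in distribution along every arithmetic sequence
    (hconv : ∀ s : ℝ, 0 < s → ∀ f : ℝ →ᵇ ℝ,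
      Tendsto (fun n : ℕ => ∫ ω, f (Y (n * s) ω) ∂ℙ) atTop (𝓝 (∫ ω, f (Yinf ω) ∂ℙ))) :
    ∀ f : ℝ →ᵇ ℝ,
      Tendsto (fun t : ℝ => ∫ ω, f (Y t ω) ∂ℙ) atTop (𝓝 (∫ ω, f (Yinf ω) ∂ℙ)) := by
  intro f
  refine tendsto_atTop_of_tendsto_nat_mul (fun t ht => ?_) fun s hs => hconv s hs f
  refine continuousWithinAt_of_dominated (bound := fun _ => ‖f‖) ?_ ?_ (integrable_const _) ?_
  · filter_upwards [self_mem_nhdsWithin] with u hu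
    exact (f.continuous.measurable.comp (hmeas u (ht.trans hu))).aestronglyMeasurable
  · exact Eventually.of_forall fun u => ae_of_all _ fun ω => f.norm_coe_le_norm _
  · exact ae_of_all _ fun ω => f.continuous.continuousAt.comp_continuousWithinAt (hrc ω t ht)

/-- Lemma 5.1 of the paper (convergence-in-distribution version): if a real-valued process
with càdlàg paths satisfies `Y_{ns} → Y_∞` in distribution along the integers for every fixed
`s > 0`, then `Y_t → Y_∞` in distribution as `t → ∞` through the reals. -/
theorem stmt2 {Ω : Type*} [MeasureSpace Ω] [IsProbabilityMeasure (ℙ : Measure Ω)]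
    (Y : ℝ → Ω → ℝ) (Yinf : Ω → ℝ)
    (hmeas : ∀ t : ℝ, 0 ≤ t → Measurable (Y t)) (hinfmeas : Measurable Yinf)
    -- right-continuity of the paths at every `t ≥ 0`
    (hrc : ∀ ω, ∀ t : ℝ, 0 ≤ t → ContinuousWithinAt (fun s => Y s ω) (Set.Ici t) t)
    -- existence of finite left limits of the paths at every `t > 0`
    (hll : ∀ ω, ∀ t : ℝ, 0 < t →
      ∃ l : ℝ, Tendsto (fun s => Y s ω) (𝓝[Set.Ico 0 t] t) (𝓝 l))
    -- convergence in distribution along every arithmetic sequence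
    (hconv : ∀ s : ℝ, 0 < s → ∀ f : ℝ →ᵇ ℝ,
      Tendsto (fun n : ℕ => ∫ ω, f (Y (n * s) ω) ∂ℙ) atTop (𝓝 (∫ ω, f (Yinf ω) ∂ℙ))) :
    ∀ f : ℝ →ᵇ ℝ,
      Tendsto (fun t : ℝ => ∫ ω, f (Y t ω) ∂ℙ) atTop (𝓝 (∫ ω, f (Yinf ω) ∂ℙ)) :=
  stmt2_general Y Yinf hmeas hrc hconv
end

section
/- Let X and Y be independent positive random variables on a probability space, let p > δ > 0, and let L : (0,∞) → (0,∞) be slowly varying at ∞. If E[X^{p+δ}] < ∞ and P(Y > y) ~ y^{−p} L(y) as y → ∞ (i.e. lim_{y→∞} P(Y > y)/(y^{−p}L(y)) = 1), then P(XY > y) ~ E[X^p] · y^{−p} L(y) as y → ∞. (Lemma A.1 of the paper.) -/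
open MeasureTheory Filter Set ProbabilityTheory
open scoped ENNReal Topology ProbabilityTheory

def SlowlyVarying (L : ℝ → ℝ) : Prop :=
  ∀ c : ℝ, 0 < c → Tendsto (fun x : ℝ => L (c * x) / L x) atTop (𝓝 1)

/-!
Write `G y = P(Y > y)`. By independence `P(XY > y) = E[G(y / X)]`, and the tail assumption makes
`G` regularly varying of index `-p`, so `G(y / x) / G(y) → x ^ p` for each `x > 0`. The ratio limit
at `c = 2` gives `G(s) ≤ 2 ^ r G(2s)` for large `s`, with `p < r < p + δ`; since `G` is antitone,
iterating it yields the Potter bound `G(y / x) ≤ (1 + 2 ^ r x ^ r) G(y)` for large `y / x`, and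
`y ^ (p + δ) G(y) → ∞`. (Monotonicity of `G` is what makes this work without any regularity of `L`.)
On `{X ≤ y / t}`, with `t` the threshold of the doubling bound, dominated convergence applies
with the majorant `1 + 2 ^ r X ^ r`; on `{X > y / t}` Markov's inequality bounds the contribution
by a multiple of `1 / (y ^ (p + δ) G(y)) → 0`.
-/

def RegularlyVarying (f : ℝ → ℝ) (ρ : ℝ) : Prop :=
  ∀ c : ℝ, 0 < c → Tendsto (fun x : ℝ => f (c * x) / f x) atTop (𝓝 (c ^ ρ))

lemma eventually_pos_of_tendsto_div_one {f g : ℝ → ℝ} (hg : ∀ᶠ x in atTop, 0 < g x)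
    (h : Tendsto (fun x => f x / g x) atTop (𝓝 1)) : ∀ᶠ x in atTop, 0 < f x := by
  filter_upwards [hg, h.eventually (eventually_gt_nhds one_pos)] with x hgx hfx
  exact (div_pos_iff_of_pos_right hgx).1 hfx

lemma SlowlyVarying.regularlyVarying_of_tendsto_div {f L : ℝ → ℝ} {ρ : ℝ} (hL : SlowlyVarying L)
    (hLpos : ∀ x, 0 < x → 0 < L x)
    (hf : Tendsto (fun x => f x / (x ^ ρ * L x)) atTop (𝓝 1)) : RegularlyVarying f ρ := by
  intro c hc
  have hden : ∀ᶠ x in atTop, 0 < x ^ ρ * L x := by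
    filter_upwards [eventually_gt_atTop 0] with x hx
    exact mul_pos (Real.rpow_pos_of_pos hx ρ) (hLpos x hx)
  have hfpos := eventually_pos_of_tendsto_div_one hden hf
  have hfc : Tendsto (fun x => f (c * x) / ((c * x) ^ ρ * L (c * x))) atTop (𝓝 1) :=
    hf.comp (tendsto_id.const_mul_atTop hc)
  have hfinv : Tendsto (fun x => x ^ ρ * L x / f x) atTop (𝓝 1) := by
    simpa only [inv_div, inv_one] using hf.inv₀ one_ne_zero
  have hlim := (hfc.mul ((hL c hc).const_mul (c ^ ρ))).mul hfinv
  rw [mul_one, one_mul, mul_one] at hlim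
  refine hlim.congr' ?_
  filter_upwards [eventually_gt_atTop 0, hfpos] with x hx hfx
  have hcx : 0 < c * x := mul_pos hc hx
  rw [Real.mul_rpow hc.le hx.le]
  field_simp [(hLpos x hx).ne', (hLpos _ hcx).ne', (Real.rpow_pos_of_pos hx ρ).ne',
    (Real.rpow_pos_of_pos hc ρ).ne', hfx.ne']

lemma RegularlyVarying.eventually_pos_and_le_rpow_mul {f : ℝ → ℝ} {p r : ℝ}
    (hf : RegularlyVarying f (-p)) (hf0 : ∀ x, 0 ≤ f x) (hpr : p < r) :
    ∀ᶠ s in atTop, 0 < f s ∧ f s ≤ 2 ^ r * f (2 * s) := by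
  have hlt : (2 : ℝ) ^ (-r) < 2 ^ (-p) := Real.rpow_lt_rpow_of_exponent_lt one_lt_two (by linarith)
  filter_upwards [(hf 2 two_pos).eventually (eventually_gt_nhds hlt)] with s hs
  have hfs : 0 < f s := by
    refine (hf0 s).lt_of_ne fun h => ?_
    rw [← h, div_zero] at hs
    exact (Real.rpow_pos_of_pos two_pos (-r)).not_ge hs.le
  refine ⟨hfs, ?_⟩
  rw [lt_div_iff₀ hfs, Real.rpow_neg zero_le_two, inv_mul_eq_div, div_lt_iff₀ (by positivity)] at hs
  linarith

section Doubling

variable {g : ℝ → ℝ} {r t : ℝ}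

lemma le_pow_mul_of_doubling {ρ : ℝ} (hρ : 0 ≤ ρ) (ht : 0 ≤ t)
    (hdouble : ∀ s, t ≤ s → g s ≤ ρ * g (2 * s)) (n : ℕ) {s : ℝ} (hs : t ≤ s) :
    g s ≤ ρ ^ n * g (2 ^ n * s) := by
  induction n generalizing s with
  | zero => simp
  | succ n ih =>
    calc g s ≤ ρ * g (2 * s) := hdouble s hs
      _ ≤ ρ * (ρ ^ n * g (2 ^ n * (2 * s))) := by gcongr; exact ih (by linarith)
      _ = ρ ^ (n + 1) * g (2 ^ (n + 1) * s) := by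
          rw [pow_succ, pow_succ, mul_assoc (2 ^ n : ℝ) 2 s]; ring

lemma Antitone.le_rpow_mul_of_doubling (hg : Antitone g) (hg0 : ∀ s, 0 ≤ g s) (ht : 0 ≤ t)
    (hr : 0 ≤ r) (hdouble : ∀ s, t ≤ s → g s ≤ 2 ^ r * g (2 * s)) {s u : ℝ} (hs : t ≤ s)
    (hu : 1 ≤ u) : g s ≤ 2 ^ r * u ^ r * g (u * s) := by
  obtain ⟨n, hnu, hun⟩ := exists_nat_pow_near hu one_lt_two
  have hpow : ((2 : ℝ) ^ r) ^ n ≤ u ^ r := by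
    rw [← Real.rpow_natCast, ← Real.rpow_mul zero_le_two, mul_comm, Real.rpow_mul zero_le_two,
      Real.rpow_natCast]
    exact Real.rpow_le_rpow (by positivity) hnu hr
  calc g s ≤ (2 ^ r) ^ (n + 1) * g (2 ^ (n + 1) * s) :=
        le_pow_mul_of_doubling (by positivity) ht hdouble (n + 1) hs
    _ ≤ (2 ^ r) ^ (n + 1) * g (u * s) := by
        gcongr
        exact hg (by gcongr; linarith)
    _ = 2 ^ r * (2 ^ r) ^ n * g (u * s) := by ring
    _ ≤ 2 ^ r * u ^ r * g (u * s) := by gcongr; exact hg0 _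

lemma Antitone.le_one_add_rpow_mul_of_doubling (hg : Antitone g) (hg0 : ∀ s, 0 ≤ g s)
    (ht : 0 ≤ t) (hr : 0 ≤ r) (hdouble : ∀ s, t ≤ s → g s ≤ 2 ^ r * g (2 * s)) {x y : ℝ}
    (hx : 0 < x) (hxy : t ≤ y / x) : g (y / x) ≤ (1 + 2 ^ r * x ^ r) * g y := by
  have hrest : 0 ≤ 2 ^ r * x ^ r * g y := by have := hg0 y; positivity
  rcases le_or_gt x 1 with hx1 | hx1
  · have hy : 0 ≤ y := by simpa [div_mul_cancel₀ y hx.ne'] using mul_nonneg (ht.trans hxy) hx.le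
    have : g (y / x) ≤ g y := hg ((le_div_iff₀ hx).2 (mul_le_of_le_one_right hy hx1))
    linarith
  · have := hg.le_rpow_mul_of_doubling hg0 ht hr hdouble hxy hx1.le
    rw [mul_div_cancel₀ y hx.ne'] at this
    linarith [hg0 y]

lemma Antitone.tendsto_rpow_mul_atTop_of_doubling (hg : Antitone g) (hg0 : ∀ s, 0 ≤ g s)
    (ht : 0 < t) (hr : 0 ≤ r) (hdouble : ∀ s, t ≤ s → g s ≤ 2 ^ r * g (2 * s))
    (hgt : 0 < g t) {q : ℝ} (hrq : r < q) :
    Tendsto (fun y => y ^ q * g y) atTop atTop := by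
  have hlim : Tendsto (fun y => g t * t ^ r / 2 ^ r * y ^ (q - r)) atTop atTop :=
    (tendsto_rpow_atTop (by linarith)).const_mul_atTop (by positivity)
  refine tendsto_atTop_mono' _ ?_ hlim
  filter_upwards [eventually_ge_atTop t] with y hy
  have hy0 : 0 < y := ht.trans_le hy
  have hpotter := hg.le_rpow_mul_of_doubling hg0 ht.le hr hdouble le_rfl ((one_le_div ht).2 hy)
  rw [div_mul_cancel₀ y ht.ne', Real.div_rpow hy0.le ht.le] at hpotter
  rw [Real.rpow_sub hy0]
  have hyr : 0 < y ^ r := Real.rpow_pos_of_pos hy0 r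
  have htr : 0 < t ^ r := Real.rpow_pos_of_pos ht r
  have hyq : 0 < y ^ q := Real.rpow_pos_of_pos hy0 q
  calc g t * t ^ r / 2 ^ r * (y ^ q / y ^ r)
      = y ^ q * (g t / (2 ^ r * (y ^ r / t ^ r))) := by field_simp
    _ ≤ y ^ q * g y := by
        gcongr
        exact div_le_of_le_mul₀ (by positivity) (hg0 y) (by linarith)

end Doubling

lemma ProbabilityTheory.IndepFun.measure_lt_mul_toReal {Ω : Type*} [MeasurableSpace Ω] {μ : Measure Ω}
    [IsFiniteMeasure μ] {X Y : Ω → ℝ} (hXY : IndepFun X Y μ) (hX : Measurable X)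
    (hY : Measurable Y) (hXpos : ∀ ω, 0 < X ω) (y : ℝ) :
    (μ {ω | y < X ω * Y ω}).toReal = ∫ ω, (μ {ω' | y / X ω < Y ω'}).toReal ∂μ := by
  set S : Set (ℝ × ℝ) := {z | y < z.1 * z.2}
  have hS : MeasurableSet S := measurableSet_lt measurable_const (measurable_fst.mul measurable_snd)
  have htail_anti : Antitone fun s => μ {ω | s < Y ω} :=
    fun a b hab => measure_mono fun ω h => hab.trans_lt h
  have hlaw : μ {ω | y < X ω * Y ω} = ∫⁻ ω, μ {ω' | y / X ω < Y ω'} ∂μ :=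
    calc μ {ω | y < X ω * Y ω} = μ.map (fun ω => (X ω, Y ω)) S := by
          rw [Measure.map_apply (hX.prodMk hY) hS]; rfl
      _ = (μ.map X).prod (μ.map Y) S := by
          rw [(indepFun_iff_map_prod_eq_prod_map_map hX.aemeasurable hY.aemeasurable).1 hXY]
      _ = ∫⁻ x, μ.map Y (Prod.mk x ⁻¹' S) ∂(μ.map X) := Measure.prod_apply hS
      _ = ∫⁻ ω, μ.map Y (Prod.mk (X ω) ⁻¹' S) ∂μ :=
          lintegral_map (measurable_measure_prodMk_left hS) hX
      _ = ∫⁻ ω, μ {ω' | y / X ω < Y ω'} ∂μ := by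
          refine lintegral_congr fun ω => ?_
          rw [Measure.map_apply hY (measurable_prodMk_left hS)]
          congr 1
          ext ω'
          simp [S, div_lt_iff₀' (hXpos ω)]
  rw [hlaw]
  exact (integral_toReal (htail_anti.measurable.comp (measurable_const.div hX)).aemeasurable
    (ae_of_all _ fun ω => measure_lt_top μ _)).symm

section Breiman

variable {Ω : Type*} [MeasurableSpace Ω] {μ : Measure Ω} [IsFiniteMeasure μ] {X : Ω → ℝ}
  {G : ℝ → ℝ}

lemma integrable_rpow_of_le (hX : Measurable X) (hXpos : ∀ ω, 0 < X ω) {r q : ℝ} (hr : 0 ≤ r)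
    (hrq : r ≤ q) (hq : Integrable (fun ω => X ω ^ q) μ) : Integrable (fun ω => X ω ^ r) μ := by
  refine ((integrable_const 1).add hq).mono' (hX.pow_const r).aestronglyMeasurable
    (ae_of_all _ fun ω => ?_)
  rw [Real.norm_of_nonneg (Real.rpow_nonneg (hXpos ω).le r)]
  show X ω ^ r ≤ 1 + X ω ^ q
  rcases le_or_gt (X ω) 1 with h | h
  · linarith [Real.rpow_le_one (hXpos ω).le h hr, Real.rpow_nonneg (hXpos ω).le q]
  · linarith [Real.rpow_le_rpow_of_exponent_le h.le hrq]

lemma Antitone.integrable_comp_div (hG : Antitone G) (hG0 : ∀ s, 0 ≤ G s) (hX : Measurable X)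
    (hXpos : ∀ ω, 0 < X ω) {y : ℝ} (hy : 0 ≤ y) : Integrable (fun ω => G (y / X ω)) μ :=
  (integrable_const (G 0)).mono' (hG.measurable.comp (measurable_const.div hX)).aestronglyMeasurable
    (ae_of_all _ fun ω => by
      rw [Real.norm_of_nonneg (hG0 _)]
      exact hG (div_nonneg hy (hXpos ω).le))

lemma tendsto_integral_indicator_le (hX : Measurable X) (hXpos : ∀ ω, 0 < X ω)
    (hG : Antitone G) (hG0 : ∀ s, 0 ≤ G s) {p r t : ℝ} (hGrv : RegularlyVarying G (-p))
    (ht : 0 < t) (hr : 0 ≤ r) (hdouble : ∀ s, t ≤ s → G s ≤ 2 ^ r * G (2 * s))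
    (hint : Integrable (fun ω => X ω ^ r) μ) :
    Tendsto (fun y => ∫ ω, {ω | X ω ≤ y / t}.indicator (fun ω => G (y / X ω) / G y) ω ∂μ)
      atTop (𝓝 (∫ ω, X ω ^ p ∂μ)) := by
  refine tendsto_integral_filter_of_dominated_convergence (fun ω => 1 + 2 ^ r * X ω ^ r)
    (Eventually.of_forall fun y => ?_) (Eventually.of_forall fun y => ae_of_all _ fun ω => ?_)
    ((integrable_const 1).add (hint.const_mul _)) (ae_of_all _ fun ω => ?_)
  · exact (((hG.measurable.comp (measurable_const.div hX)).div_const _).indicator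
      (measurableSet_le hX measurable_const)).aestronglyMeasurable
  · have hbound : 0 ≤ 1 + 2 ^ r * X ω ^ r := by have := (hXpos ω).le; positivity
    by_cases hω : ω ∈ {ω | X ω ≤ y / t}
    · rw [indicator_of_mem hω, Real.norm_of_nonneg (div_nonneg (hG0 _) (hG0 _))]
      have hty : t ≤ y / X ω := (le_div_iff₀ (hXpos ω)).2 (by linarith [(le_div_iff₀ ht).1 hω])
      exact div_le_of_le_mul₀ (hG0 y) hbound
        (hG.le_one_add_rpow_mul_of_doubling hG0 ht.le hr hdouble (hXpos ω) hty)
    · rw [indicator_of_notMem hω, norm_zero]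
      exact hbound
  · have hlim := hGrv (X ω)⁻¹ (inv_pos.2 (hXpos ω))
    rw [Real.inv_rpow (hXpos ω).le, Real.rpow_neg (hXpos ω).le, inv_inv] at hlim
    refine hlim.congr' ?_
    filter_upwards [eventually_ge_atTop (X ω * t)] with y hy
    rw [indicator_of_mem (show ω ∈ {ω | X ω ≤ y / t} from (le_div_iff₀ ht).2 hy), inv_mul_eq_div]

lemma tendsto_integral_indicator_gt (hX : Measurable X) (hXpos : ∀ ω, 0 < X ω)
    (hG : Antitone G) (hG0 : ∀ s, 0 ≤ G s) {q t : ℝ} (ht : 0 < t) (hq : 0 ≤ q)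
    (hint : Integrable (fun ω => X ω ^ q) μ)
    (hgrowth : Tendsto (fun y => y ^ q * G y) atTop atTop) :
    Tendsto (fun y => ∫ ω, {ω | y / t < X ω}.indicator (fun ω => G (y / X ω) / G y) ω ∂μ)
      atTop (𝓝 0) := by
  set M := ∫ ω, X ω ^ q ∂μ
  have hS : ∀ y, MeasurableSet {ω | y / t < X ω} := fun y => measurableSet_lt measurable_const hX
  have hlim : Tendsto (fun y => G 0 * M * t ^ q * (y ^ q * G y)⁻¹) atTop (𝓝 0) := by
    simpa using hgrowth.inv_tendsto_atTop.const_mul (G 0 * M * t ^ q)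
  refine squeeze_zero' (Eventually.of_forall fun y => integral_nonneg fun ω =>
    indicator_nonneg (fun ω _ => div_nonneg (hG0 _) (hG0 _)) ω) ?_ hlim
  filter_upwards [eventually_gt_atTop 0] with y hy
  have hyt : 0 < y / t := div_pos hy ht
  have hmarkov : (y / t) ^ q * μ.real {ω | y / t < X ω} ≤ M := by
    refine le_trans ?_ (mul_meas_ge_le_integral_of_nonneg
      (ae_of_all _ fun ω => Real.rpow_nonneg (hXpos ω).le q) hint ((y / t) ^ q))
    gcongr
    · exact measure_ne_top _ _
    · exact fun hω => Real.rpow_le_rpow hyt.le hω.le hq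
  have hG0y : 0 ≤ G 0 / G y := div_nonneg (hG0 0) (hG0 y)
  calc ∫ ω, {ω | y / t < X ω}.indicator (fun ω => G (y / X ω) / G y) ω ∂μ
      ≤ ∫ ω, {ω | y / t < X ω}.indicator (fun _ => G 0 / G y) ω ∂μ :=
        integral_mono_of_nonneg
          (ae_of_all _ fun ω => indicator_nonneg (fun ω _ => div_nonneg (hG0 _) (hG0 _)) ω)
          ((integrable_const _).indicator (hS y))
          (ae_of_all _ fun ω => indicator_le_indicator
            (div_le_div_of_nonneg_right (hG (div_nonneg hy.le (hXpos ω).le)) (hG0 y)))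
    _ = G 0 / G y * μ.real {ω | y / t < X ω} := by
        rw [integral_indicator_const _ (hS y), smul_eq_mul, mul_comm]
    _ ≤ G 0 / G y * (M / (y / t) ^ q) := by
        gcongr
        rw [le_div_iff₀ (Real.rpow_pos_of_pos hyt q)]
        linarith
    _ = G 0 * M * t ^ q * (y ^ q * G y)⁻¹ := by
        rw [Real.div_rpow hy.le ht.le, div_div_eq_mul_div]
        ring

theorem tendsto_integral_comp_div_div_of_regularlyVarying (hX : Measurable X)
    (hXpos : ∀ ω, 0 < X ω) {p δ : ℝ} (hp : 0 ≤ p) (hδ : 0 < δ)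
    (hmom : Integrable (fun ω => X ω ^ (p + δ)) μ) (hG : Antitone G) (hG0 : ∀ s, 0 ≤ G s)
    (hGrv : RegularlyVarying G (-p)) :
    Tendsto (fun y => (∫ ω, G (y / X ω) ∂μ) / G y) atTop (𝓝 (∫ ω, X ω ^ p ∂μ)) := by
  obtain ⟨t₀, ht₀⟩ := eventually_atTop.1
    (hGrv.eventually_pos_and_le_rpow_mul hG0 (show p < p + δ / 2 by linarith))
  set t := max t₀ 1
  have ht : 0 < t := zero_lt_one.trans_le (le_max_right _ _)
  have hdouble : ∀ s, t ≤ s → G s ≤ 2 ^ (p + δ / 2) * G (2 * s) :=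
    fun s hs => (ht₀ s ((le_max_left _ _).trans hs)).2
  have hgrowth := hG.tendsto_rpow_mul_atTop_of_doubling hG0 ht (by linarith) hdouble
    (ht₀ t (le_max_left _ _)).1 (show p + δ / 2 < p + δ by linarith)
  have hlim := (tendsto_integral_indicator_le hX hXpos hG hG0 hGrv ht (by linarith) hdouble
    (integrable_rpow_of_le hX hXpos (by linarith) (by linarith) hmom)).add
    (tendsto_integral_indicator_gt hX hXpos hG hG0 ht (by linarith) hmom hgrowth)
  rw [add_zero] at hlim
  refine hlim.congr' ?_
  filter_upwards [eventually_ge_atTop 0] with y hy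
  have hS : MeasurableSet {ω | X ω ≤ y / t} := measurableSet_le hX measurable_const
  have hSc : {ω | y / t < X ω} = {ω | X ω ≤ y / t}ᶜ := by ext; simp
  rw [hSc, integral_indicator hS, integral_indicator hS.compl,
    integral_add_compl hS ((hG.integrable_comp_div hG0 hX hXpos hy).div_const _), integral_div]

end Breiman

theorem stmt6_general {Ω : Type*} [MeasureSpace Ω] [IsProbabilityMeasure (ℙ : Measure Ω)]
    (X Y : Ω → ℝ) (hXmeas : Measurable X) (hYmeas : Measurable Y)
    (hXpos : ∀ ω, 0 < X ω)
    (hindep : IndepFun X Y ℙ)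
    (p δ : ℝ) (hδ : 0 < δ) (hδp : δ < p)
    (L : ℝ → ℝ) (hLpos : ∀ x : ℝ, 0 < x → 0 < L x) (hLsv : SlowlyVarying L)
    (hmom : Integrable (fun ω => X ω ^ (p + δ)) ℙ)
    (htail : Tendsto (fun y : ℝ => (ℙ {ω | y < Y ω}).toReal / (y ^ (-p) * L y))
      atTop (𝓝 1)) :
    Tendsto (fun y : ℝ => (ℙ {ω | y < X ω * Y ω}).toReal / (y ^ (-p) * L y))
      atTop (𝓝 (∫ ω, X ω ^ p ∂ℙ)) := by
  set G : ℝ → ℝ := fun s => (ℙ {ω | s < Y ω}).toReal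
  have hG : Antitone G := fun a b hab =>
    ENNReal.toReal_mono (measure_ne_top _ _) (measure_mono fun ω h => hab.trans_lt h)
  have hGpos : ∀ᶠ y in atTop, 0 < G y := eventually_pos_of_tendsto_div_one
    (eventually_gt_atTop 0 |>.mono fun y hy => mul_pos (Real.rpow_pos_of_pos hy _) (hLpos y hy))
    htail
  have hratio := tendsto_integral_comp_div_div_of_regularlyVarying hXmeas hXpos
    (hδ.trans hδp).le hδ hmom hG (fun _ => ENNReal.toReal_nonneg)
    (hLsv.regularlyVarying_of_tendsto_div hLpos htail)
  rw [← mul_one (∫ ω, X ω ^ p ∂ℙ)]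
  refine (hratio.mul htail).congr' ?_
  filter_upwards [hGpos] with y hy
  rw [hindep.measure_lt_mul_toReal hXmeas hYmeas hXpos y]
  exact div_mul_div_cancel₀ hy.ne'

/-- Lemma A.1 of the paper (a Breiman-type lemma): if `X, Y` are independent positive
random variables with `E[X^{p+δ}] < ∞` and `P(Y > y) ~ y^{−p} L(y)`, then
`P(XY > y) ~ E[X^p] y^{−p} L(y)` as `y → ∞`. -/
theorem stmt6 {Ω : Type*} [MeasureSpace Ω] [IsProbabilityMeasure (ℙ : Measure Ω)]
    (X Y : Ω → ℝ) (hXmeas : Measurable X) (hYmeas : Measurable Y)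
    (hXpos : ∀ ω, 0 < X ω) (hYpos : ∀ ω, 0 < Y ω)
    (hindep : IndepFun X Y ℙ)
    (p δ : ℝ) (hδ : 0 < δ) (hδp : δ < p)
    (L : ℝ → ℝ) (hLpos : ∀ x : ℝ, 0 < x → 0 < L x) (hLsv : SlowlyVarying L)
    (hmom : Integrable (fun ω => X ω ^ (p + δ)) ℙ)
    (htail : Tendsto (fun y : ℝ => (ℙ {ω | y < Y ω}).toReal / (y ^ (-p) * L y))
      atTop (𝓝 1)) :
    Tendsto (fun y : ℝ => (ℙ {ω | y < X ω * Y ω}).toReal / (y ^ (-p) * L y))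
      atTop (𝓝 (∫ ω, X ω ^ p ∂ℙ)) :=
  stmt6_general X Y hXmeas hYmeas hXpos hindep p δ hδ hδp L hLpos hLsv hmom htail
end

section
/- Let n ≥ 0 be an integer and p ∈ [n, n+1]. Let L : (0,∞) → (0,∞) be slowly varying at ∞ and such that x ↦ x^{p−n} L(x) is nondecreasing and x ↦ x^{−(n+1−p)} L(x) is nonincreasing on (0,∞). Then for all x, y > 0: min( (xy)^n , (xy)^{n+1} ) ≤ x^p L(x) · y^p / L(y^{−1}). (Lemma A.3 of the paper.) -/
open Filter Set
open scoped Topology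

/-- Lemma A.3 of the paper: if `x ↦ x^{p−n} L(x)` is nondecreasing and
`x ↦ x^{−(n+1−p)} L(x)` is nonincreasing on `(0,∞)`, then for all `x, y > 0`,
`min((xy)^n, (xy)^{n+1}) ≤ x^p L(x) y^p / L(1/y)`. -/
theorem stmt8 (n : ℕ) (p : ℝ) (hp : (n : ℝ) ≤ p ∧ p ≤ (n : ℝ) + 1)
    (L : ℝ → ℝ) (hLpos : ∀ x : ℝ, 0 < x → 0 < L x) (hLsv : SlowlyVarying L)
    (hmono : ∀ x y : ℝ, 0 < x → x ≤ y → x ^ (p - n) * L x ≤ y ^ (p - n) * L y)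
    (hanti : ∀ x y : ℝ, 0 < x → x ≤ y →
      y ^ (-((n : ℝ) + 1 - p)) * L y ≤ x ^ (-((n : ℝ) + 1 - p)) * L x)
    (x y : ℝ) (hx : 0 < x) (hy : 0 < y) :
    min ((x * y) ^ n) ((x * y) ^ (n + 1)) ≤ x ^ p * L x * y ^ p / L y⁻¹ := by
  have hz : (0:ℝ) < y⁻¹ := inv_pos.mpr hy
  have hLz : 0 < L y⁻¹ := hLpos _ hz
  have hLx : 0 < L x := hLpos x hx
  rw [le_div_iff₀ hLz]
  rcases le_total x y⁻¹ with h | h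
  · -- use hanti; min ≤ (xy)^(n+1)
    set a : ℝ := (n:ℝ) + 1 - p with ha
    have key : (y⁻¹) ^ (-a) * L y⁻¹ ≤ x ^ (-a) * L x := hanti x y⁻¹ hx h
    have hinv : (y⁻¹ : ℝ) ^ (-a) = y ^ a := by
      rw [← Real.rpow_neg_one y, ← Real.rpow_mul hy.le]
      norm_num
    rw [hinv] at key
    have hya : (0:ℝ) < y ^ a := Real.rpow_pos_of_pos hy a
    have key2 : L y⁻¹ ≤ y ^ (-a) * (x ^ (-a) * L x) := by
      have h2 := mul_le_mul_of_nonneg_left key (Real.rpow_pos_of_pos hy (-a)).le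
      calc L y⁻¹ = y ^ (-a) * (y ^ a * L y⁻¹) := by
            rw [← mul_assoc, ← Real.rpow_add hy]; simp
        _ ≤ y ^ (-a) * (x ^ (-a) * L x) := h2
    calc min ((x * y) ^ n) ((x * y) ^ (n + 1)) * L y⁻¹
        ≤ (x * y) ^ (n + 1) * L y⁻¹ := by
          exact mul_le_mul_of_nonneg_right (min_le_right _ _) hLz.le
      _ ≤ (x * y) ^ (n + 1) * (y ^ (-a) * (x ^ (-a) * L x)) := by
          exact mul_le_mul_of_nonneg_left key2 (by positivity)
      _ = x ^ p * L x * y ^ p := by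
          rw [mul_pow, ← Real.rpow_natCast x (n+1), ← Real.rpow_natCast y (n+1)]
          have hxp : x ^ (((n+1:ℕ)):ℝ) * x ^ (-a) = x ^ p := by
            rw [← Real.rpow_add hx]; congr 1; push_cast [ha]; ring
          have hyp : y ^ (((n+1:ℕ)):ℝ) * y ^ (-a) = y ^ p := by
            rw [← Real.rpow_add hy]; congr 1; push_cast [ha]; ring
          calc x ^ (((n+1:ℕ)):ℝ) * y ^ (((n+1:ℕ)):ℝ) * (y ^ (-a) * (x ^ (-a) * L x))
              = (x ^ (((n+1:ℕ)):ℝ) * x ^ (-a)) * (y ^ (((n+1:ℕ)):ℝ) * y ^ (-a)) * L x := by ring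
            _ = x ^ p * y ^ p * L x := by rw [hxp, hyp]
            _ = x ^ p * L x * y ^ p := by ring
  · -- use hmono; min ≤ (xy)^n
    set b : ℝ := p - n with hb
    have key : (y⁻¹) ^ b * L y⁻¹ ≤ x ^ b * L x := hmono y⁻¹ x hz h
    have hinv : (y⁻¹ : ℝ) ^ b = y ^ (-b) := by
      rw [← Real.rpow_neg_one y, ← Real.rpow_mul hy.le]
      norm_num
    rw [hinv] at key
    have hyb : (0:ℝ) < y ^ (-b) := Real.rpow_pos_of_pos hy _
    have key2 : L y⁻¹ ≤ y ^ b * (x ^ b * L x) := by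
      have : y ^ b * (y ^ (-b) * L y⁻¹) ≤ y ^ b * (x ^ b * L x) :=
        mul_le_mul_of_nonneg_left key (Real.rpow_pos_of_pos hy b).le
      calc L y⁻¹ = y ^ b * (y ^ (-b) * L y⁻¹) := by
            rw [← mul_assoc, ← Real.rpow_add hy]; simp
        _ ≤ y ^ b * (x ^ b * L x) := this
    calc min ((x * y) ^ n) ((x * y) ^ (n + 1)) * L y⁻¹
        ≤ (x * y) ^ n * L y⁻¹ := mul_le_mul_of_nonneg_right (min_le_left _ _) hLz.le
      _ ≤ (x * y) ^ n * (y ^ b * (x ^ b * L x)) :=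
          mul_le_mul_of_nonneg_left key2 (by positivity)
      _ = x ^ p * L x * y ^ p := by
          rw [mul_pow, ← Real.rpow_natCast x n, ← Real.rpow_natCast y n]
          have hxp : x ^ ((n:ℕ):ℝ) * x ^ b = x ^ p := by
            rw [← Real.rpow_add hx]; congr 1; push_cast [hb]; ring
          have hyp : y ^ ((n:ℕ):ℝ) * y ^ b = y ^ p := by
            rw [← Real.rpow_add hy]; congr 1; push_cast [hb]; ring
          calc x ^ ((n:ℕ):ℝ) * y ^ ((n:ℕ):ℝ) * (y ^ b * (x ^ b * L x))
              = (x ^ ((n:ℕ):ℝ) * x ^ b) * (y ^ ((n:ℕ):ℝ) * y ^ b) * L x := by ring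
            _ = x ^ p * y ^ p * L x := by rw [hxp, hyp]
            _ = x ^ p * L x * y ^ p := by ring
end

section
/- For every C > 1, every x > 0 and every u > 0: ( 1 + log₊(u^{−1}) / log C )^{−1} ≤ log( (ux) ∨ C ) / log( x ∨ C ) ≤ 1 + log₊(u) / log C. (Display (3.25)/(inequality2), proved in the paper in the proof of Theorem 3.5.) -/
lemma stmt13_aux (C x u : ℝ) (hC : 1 < C) (hx : 0 < x) (hu : 0 < u) :
    Real.log (max (u * x) C) ≤ Real.log (max x C) + max (Real.log u) 0 := by
  have hC0 : (0:ℝ) < C := lt_trans one_pos hC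
  have hlogx : Real.log x ≤ Real.log (max x C) :=
    Real.log_le_log hx (le_max_left _ _)
  have hlogC : Real.log C ≤ Real.log (max x C) :=
    Real.log_le_log hC0 (le_max_right _ _)
  rcases le_total (u * x) C with h | h
  · rw [max_eq_right h]
    have := le_max_right (Real.log u) 0
    linarith
  · rw [max_eq_left h, Real.log_mul (ne_of_gt hu) (ne_of_gt hx)]
    have := le_max_left (Real.log u) 0
    linarith

/-- Display (3.25) of the paper (proved there in the proof of Theorem 3.5):
for every `C > 1`, `x > 0` and `u > 0`,
`(1 + log₊(u⁻¹)/log C)⁻¹ ≤ log((ux) ∨ C) / log(x ∨ C) ≤ 1 + log₊(u)/log C`. -/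
theorem stmt13 (C x u : ℝ) (hC : 1 < C) (hx : 0 < x) (hu : 0 < u) :
    (1 + max (Real.log u⁻¹) 0 / Real.log C)⁻¹ ≤
        Real.log (max (u * x) C) / Real.log (max x C) ∧
      Real.log (max (u * x) C) / Real.log (max x C) ≤
        1 + max (Real.log u) 0 / Real.log C := by
  have hC0 : (0:ℝ) < C := lt_trans one_pos hC
  have hlC : 0 < Real.log C := Real.log_pos hC
  have hLx : Real.log C ≤ Real.log (max x C) :=
    Real.log_le_log hC0 (le_max_right _ _)
  have hLux : Real.log C ≤ Real.log (max (u * x) C) :=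
    Real.log_le_log hC0 (le_max_right _ _)
  have hLxpos : 0 < Real.log (max x C) := lt_of_lt_of_le hlC hLx
  have hLuxpos : 0 < Real.log (max (u * x) C) := lt_of_lt_of_le hlC hLux
  constructor
  · -- lower bound
    have key : Real.log (max x C) ≤
        Real.log (max (u * x) C) + max (Real.log u⁻¹) 0 := by
      have := stmt13_aux C (u * x) u⁻¹ hC (mul_pos hu hx) (inv_pos.mpr hu)
      rwa [inv_mul_cancel_left₀ (ne_of_gt hu)] at this
    have hnum : 0 ≤ max (Real.log u⁻¹) 0 := le_max_right _ _
    have hden : 0 < 1 + max (Real.log u⁻¹) 0 / Real.log C := by positivity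
    rw [inv_le_iff_one_le_mul₀' hden, mul_div_assoc', le_div_iff₀ hLxpos, one_mul]
    have key2 : Real.log (max x C) ≤
        Real.log (max (u * x) C) * (1 + max (Real.log u⁻¹) 0 / Real.log C) := by
      have h1 : max (Real.log u⁻¹) 0 ≤
          Real.log (max (u * x) C) * (max (Real.log u⁻¹) 0 / Real.log C) := by
        rw [mul_div_assoc']
        rw [le_div_iff₀ hlC]
        have := mul_le_mul_of_nonneg_right hLux hnum
        linarith [this]
      nlinarith [key, h1]
    nlinarith [key2]
  · -- upper bound
    have key := stmt13_aux C x u hC hx hu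
    rw [div_le_iff₀ hLxpos]
    have h1 : max (Real.log u) 0 ≤
        Real.log (max x C) * (max (Real.log u) 0 / Real.log C) := by
      rw [mul_div_assoc', le_div_iff₀ hlC]
      rw [mul_comm]
      exact mul_le_mul_of_nonneg_right hLx (le_max_right _ _)
    nlinarith [key, h1]
end
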